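/- arXiv:1306.5015 — 2 statements merged into one kernel-verified Lean document; each statement's English description precedes it below -/
import Mathlib

section
/- Let d ≥ 1, α ∈ (0,2), β ∈ [0, α/2] and γ ∈ ℝ. Then there is a constant C > 0, depending only on d, α and β, such that for all t ∈ (0,1), ∫_{ℝ^d} ϱ^β_γ(t,x) dx ≤ C t^{(γ+β-α)/α}. -/
/-!
Drop the cut-off: `min (‖x‖ ^ β) 1 ≤ ‖x‖ ^ β`. With `s = t ^ (1 / α)`, the profile
`‖x‖ ^ β (s + ‖x‖) ^ (-(d + α))` is `s ^ (β - d - α)` times the profile at `s = 1` evaluated at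
`s⁻¹ • x`, so by scaling its integral is `s ^ (β - α) = t ^ ((β - α) / α)` times a constant. That
constant is finite because `β < α` gives decay like `‖x‖ ^ (β - d - α)` at infinity, while `β ≥ 0`
keeps the profile bounded near the origin.
-/

open MeasureTheory Real Filter Topology

/-- The function `ϱ^β_γ(t,x) = t^{γ/α} (|x|^β ∧ 1) (t^{1/α} + |x|)^{-d-α}`. -/
noncomputable def rho (d : ℕ) (α β γ : ℝ) (t : ℝ) (x : EuclideanSpace ℝ (Fin d)) : ℝ :=
  t ^ (γ / α) * min (‖x‖ ^ β) 1 * (t ^ (1 / α) + ‖x‖) ^ (-(d : ℝ) - α)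

open Module

section Profile

variable {E : Type*} [NormedAddCommGroup E] [NormedSpace ℝ E]

lemma norm_rpow_mul_add_norm_rpow_eq {s : ℝ} (hs : 0 < s) (β r : ℝ) (x : E) :
    ‖x‖ ^ β * (s + ‖x‖) ^ (-r) = s ^ (β - r) * (‖s⁻¹ • x‖ ^ β * (1 + ‖s⁻¹ • x‖) ^ (-r)) := by
  have hsx : s + ‖x‖ = s * (1 + ‖s⁻¹ • x‖) := by
    rw [norm_smul, norm_inv, norm_of_nonneg hs.le]; field_simp
  rw [hsx, mul_rpow hs.le (by positivity), norm_smul, norm_inv, norm_of_nonneg hs.le,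
    mul_rpow (by positivity) (norm_nonneg x), inv_rpow hs.le, sub_eq_add_neg, rpow_add hs]
  field_simp

variable [FiniteDimensional ℝ E] [MeasurableSpace E] [BorelSpace E]
  (μ : Measure E) [μ.IsAddHaarMeasure]

lemma integrable_norm_rpow_mul_one_add_norm_rpow {β r : ℝ} (hβ : 0 ≤ β)
    (hr : (finrank ℝ E : ℝ) + β < r) :
    Integrable (fun x : E => ‖x‖ ^ β * (1 + ‖x‖) ^ (-r)) μ := by
  refine (integrable_one_add_norm (μ := μ) (r := r - β) (by linarith)).mono
    (by fun_prop) (ae_of_all _ fun x => ?_)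
  have hx : (0 : ℝ) < 1 + ‖x‖ := by positivity
  rw [norm_of_nonneg (by positivity), norm_of_nonneg (by positivity)]
  calc ‖x‖ ^ β * (1 + ‖x‖) ^ (-r) ≤ (1 + ‖x‖) ^ β * (1 + ‖x‖) ^ (-r) := by
        gcongr; linarith
    _ = (1 + ‖x‖) ^ (-(r - β)) := by rw [← rpow_add hx]; ring_nf

lemma integrable_norm_rpow_mul_add_norm_rpow {β r s : ℝ} (hβ : 0 ≤ β)
    (hr : (finrank ℝ E : ℝ) + β < r) (hs : 0 < s) :
    Integrable (fun x : E => ‖x‖ ^ β * (s + ‖x‖) ^ (-r)) μ := by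
  simp_rw [norm_rpow_mul_add_norm_rpow_eq hs]
  exact (((integrable_norm_rpow_mul_one_add_norm_rpow μ hβ hr).comp_smul
    (inv_ne_zero hs.ne')).const_mul _)

lemma integral_norm_rpow_mul_add_norm_rpow {s : ℝ} (hs : 0 < s) (β r : ℝ) :
    ∫ x, ‖x‖ ^ β * (s + ‖x‖) ^ (-r) ∂μ
      = s ^ ((finrank ℝ E : ℝ) + β - r) * ∫ x, ‖x‖ ^ β * (1 + ‖x‖) ^ (-r) ∂μ := by
  simp_rw [norm_rpow_mul_add_norm_rpow_eq hs]
  rw [integral_const_mul, Measure.integral_comp_inv_smul μ (fun x => ‖x‖ ^ β * (1 + ‖x‖) ^ (-r)),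
    smul_eq_mul, abs_of_pos (by positivity), ← rpow_natCast, ← mul_assoc, ← rpow_add hs]
  ring_nf

end Profile

lemma rho_le (d : ℕ) (α β γ : ℝ) {t : ℝ} (ht : 0 ≤ t) (x : EuclideanSpace ℝ (Fin d)) :
    rho d α β γ t x ≤ t ^ (γ / α) * (‖x‖ ^ β * (t ^ (1 / α) + ‖x‖) ^ (-((d : ℝ) + α))) := by
  rw [rho, neg_add', mul_assoc]
  gcongr
  exact min_le_left _ _

lemma rho_nonneg (d : ℕ) (α β γ : ℝ) {t : ℝ} (ht : 0 ≤ t) (x : EuclideanSpace ℝ (Fin d)) :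
    0 ≤ rho d α β γ t x := by
  unfold rho
  have : 0 ≤ min (‖x‖ ^ β) 1 := le_min (by positivity) zero_le_one
  positivity

theorem stmt0_general (d : ℕ) (α β : ℝ) (hα0 : 0 < α)
    (hβ0 : 0 ≤ β) (hβ : β ≤ α / 2) :
    ∃ C > 0, ∀ (γ t : ℝ), 0 < t → t < 1 →
      (∫ x : EuclideanSpace ℝ (Fin d), rho d α β γ t x) ≤ C * t ^ ((γ + β - α) / α) := by
  set I := ∫ x : EuclideanSpace ℝ (Fin d), ‖x‖ ^ β * (1 + ‖x‖) ^ (-((d : ℝ) + α))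
  have hI : 0 ≤ I := integral_nonneg fun _ => by positivity
  refine ⟨I + 1, by positivity, fun γ t ht _ => ?_⟩
  have hdim : (finrank ℝ (EuclideanSpace ℝ (Fin d)) : ℝ) + β < d + α := by
    rw [finrank_euclideanSpace_fin]; linarith
  have hscale : (t ^ (1 / α)) ^ ((d : ℝ) + β - (d + α)) = t ^ ((β - α) / α) := by
    rw [← rpow_mul ht.le]; ring_nf
  calc (∫ x : EuclideanSpace ℝ (Fin d), rho d α β γ t x)
      ≤ ∫ x : EuclideanSpace ℝ (Fin d),
          t ^ (γ / α) * (‖x‖ ^ β * (t ^ (1 / α) + ‖x‖) ^ (-((d : ℝ) + α))) :=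
        integral_mono_of_nonneg (ae_of_all _ (rho_nonneg d α β γ ht.le))
          ((integrable_norm_rpow_mul_add_norm_rpow _ hβ0 hdim (by positivity)).const_mul _)
          (ae_of_all _ (rho_le d α β γ ht.le))
    _ = I * t ^ ((γ + β - α) / α) := by
        rw [integral_const_mul, integral_norm_rpow_mul_add_norm_rpow _ (by positivity),
          finrank_euclideanSpace_fin, hscale, ← mul_assoc, ← rpow_add ht, mul_comm,
          show γ / α + (β - α) / α = (γ + β - α) / α by ring]
    _ ≤ (I + 1) * t ^ ((γ + β - α) / α) := by gcongr; linarith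

/-- for `β ∈ [0, α/2]` there is `C > 0`, depending only on `d, α, β`,
such that for all `γ ∈ ℝ` and `t ∈ (0,1)`,
`∫_{ℝ^d} ϱ^β_γ(t,x) dx ≤ C t^{(γ+β-α)/α}`. -/
theorem stmt0 (d : ℕ) (hd : 1 ≤ d) (α β : ℝ) (hα0 : 0 < α) (hα2 : α < 2)
    (hβ0 : 0 ≤ β) (hβ : β ≤ α / 2) :
    ∃ C > 0, ∀ (γ t : ℝ), 0 < t → t < 1 →
      (∫ x : EuclideanSpace ℝ (Fin d), rho d α β γ t x) ≤ C * t ^ ((γ + β - α) / α) :=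
  stmt0_general d α β hα0 hβ0 hβ
end

section
/- Let d ≥ 1, α ∈ (0,2), β₁, β₂ ∈ [0, α/4] and γ₁, γ₂ ∈ ℝ. Then there is a constant C > 0, depending only on d, α, β₁ and β₂, such that for all 0 < s < t ≤ 1 and x ∈ ℝ^d: ∫_{ℝ^d} ϱ^{β₁}_{γ₁}(t−s, x−z) ϱ^{β₂}_{γ₂}(s, z) dz ≤ C [ ( (t−s)^{(γ₁+β₁+β₂−α)/α} s^{γ₂/α} + (t−s)^{γ₁/α} s^{(γ₂+β₁+β₂−α)/α} ) ϱ^0_0(t,x) + (t−s)^{(γ₁+β₁−α)/α} s^{γ₂/α} ϱ^{β₂}_0(t,x) + (t−s)^{γ₁/α} s^{(γ₂+β₂−α)/α} ϱ^{β₁}_0(t,x) ]. -/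
/-!
Write `a = (t-s)^{1/α}`, `b = s^{1/α}`. Since `max (t-s) s ≥ t/2`, for every `z` one of
`a + |x-z|` and `b + |z|` is at least `c (t^{1/α} + |x|)`, so the product of the two factors
`(a + |x-z|)^{-d-α} (b + |z|)^{-d-α}` is at most `c' (t^{1/α} + |x|)^{-d-α}` times their sum.
For `β ≤ 1` the weight `r ↦ r^β ∧ 1` is subadditive, so
`(|x-z|^{β₁} ∧ 1)(|z|^{β₂} ∧ 1) ≤ (|x|^{β₁} ∧ 1)(|z|^{β₂} ∧ 1) + (|z|^{β₁+β₂} ∧ 1)`,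
and symmetrically with the roles of `z` and `x - z` exchanged.
Every resulting term is the integral of a single kernel, which by scaling is
`b^{β-α} ∫ (1 + |w|)^{β-d-α} dw`, finite because `β < α`.
-/

open MeasureTheory Real Filter Topology

open Module

lemma min_add_one_le_add_min_one {u v : ℝ} (hu : 0 ≤ u) (hv : 0 ≤ v) :
    min (u + v) 1 ≤ min u 1 + min v 1 := by
  simp only [min_def]
  split_ifs <;> linarith

lemma min_rpow_one_le_add {β r u v : ℝ} (hβ0 : 0 ≤ β) (hβ1 : β ≤ 1) (hr : 0 ≤ r)
    (hu : 0 ≤ u) (hv : 0 ≤ v) (h : r ≤ u + v) :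
    min (r ^ β) 1 ≤ min (u ^ β) 1 + min (v ^ β) 1 :=
  calc min (r ^ β) 1 ≤ min (u ^ β + v ^ β) 1 := by
        gcongr
        exact (rpow_le_rpow hr h hβ0).trans (rpow_add_le_add_rpow hu hv hβ0 hβ1)
    _ ≤ min (u ^ β) 1 + min (v ^ β) 1 :=
        min_add_one_le_add_min_one (rpow_nonneg hu β) (rpow_nonneg hv β)

lemma min_rpow_one_mul_min_rpow_one_le {β₁ β₂ r : ℝ} (hβ₁ : 0 ≤ β₁) (hβ₂ : 0 ≤ β₂) (hr : 0 ≤ r) :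
    min (r ^ β₁) 1 * min (r ^ β₂) 1 ≤ min (r ^ (β₁ + β₂)) 1 := by
  rw [rpow_add_of_nonneg hr hβ₁ hβ₂]
  have h₁ : 0 ≤ min (r ^ β₁) 1 := le_min (rpow_nonneg hr β₁) zero_le_one
  have h₂ : 0 ≤ min (r ^ β₂) 1 := le_min (rpow_nonneg hr β₂) zero_le_one
  exact le_min (mul_le_mul (min_le_left _ _) (min_le_left _ _) h₂ (rpow_nonneg hr β₁))
    (mul_le_one₀ (min_le_right _ _) h₂ (min_le_right _ _))

lemma min_rpow_one_mul_min_rpow_one_le_add {β₁ β₂ r u v : ℝ} (hβ₁ : 0 ≤ β₁) (hβ₁1 : β₁ ≤ 1)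
    (hβ₂ : 0 ≤ β₂) (hr : 0 ≤ r) (hu : 0 ≤ u) (hv : 0 ≤ v) (h : r ≤ u + v) :
    min (r ^ β₁) 1 * min (v ^ β₂) 1 ≤
      min (u ^ β₁) 1 * min (v ^ β₂) 1 + min (v ^ (β₁ + β₂)) 1 :=
  calc min (r ^ β₁) 1 * min (v ^ β₂) 1
      ≤ (min (u ^ β₁) 1 + min (v ^ β₁) 1) * min (v ^ β₂) 1 := by
        gcongr
        exact min_rpow_one_le_add hβ₁ hβ₁1 hr hu hv h
    _ ≤ min (u ^ β₁) 1 * min (v ^ β₂) 1 + min (v ^ (β₁ + β₂)) 1 := by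
        rw [add_mul]
        gcongr
        exact min_rpow_one_mul_min_rpow_one_le hβ₁ hβ₂ hv

lemma rpow_mul_rpow_le_of_le_max {p q M κ : ℝ} (hp : 0 < p) (hq : 0 < q) (hM : 0 < M)
    (h : M ≤ max p q) (hκ : κ ≤ 0) :
    p ^ κ * q ^ κ ≤ M ^ κ * (p ^ κ + q ^ κ) := by
  have hpκ := rpow_nonneg hp.le κ
  have hqκ := rpow_nonneg hq.le κ
  rcases le_total p q with hpq | hqp
  · have : q ^ κ ≤ M ^ κ := rpow_le_rpow_of_nonpos hM (h.trans_eq (max_eq_right hpq)) hκ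
    nlinarith
  · have : p ^ κ ≤ M ^ κ := rpow_le_rpow_of_nonpos hM (h.trans_eq (max_eq_left hqp)) hκ
    nlinarith

lemma half_rpow_mul_rpow_le {p s t : ℝ} (hp : 0 ≤ p) (hs : 0 ≤ s) (hst : s ≤ t) :
    (1 / 2 : ℝ) ^ p * t ^ p ≤ (t - s) ^ p + s ^ p := by
  rw [← mul_rpow (by norm_num) (hs.trans hst)]
  rcases le_total s (t - s) with h | h
  · linarith [rpow_le_rpow (by linarith) (by linarith : 1 / 2 * t ≤ t - s) hp, rpow_nonneg hs p]
  · linarith [rpow_le_rpow (by linarith) (by linarith : 1 / 2 * t ≤ s) hp,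
      rpow_nonneg (sub_nonneg.2 hst) p]

lemma le_max_add_norm_sub_add_norm {E : Type*} [SeminormedAddCommGroup E] {a b c T : ℝ}
    (hc1 : c ≤ 1) (h : c * T ≤ a + b) (x z : E) :
    c / 2 * (T + ‖x‖) ≤ max (a + ‖x - z‖) (b + ‖z‖) := by
  have hx : c * ‖x‖ ≤ ‖x‖ := mul_le_of_le_one_left (norm_nonneg x) hc1
  linarith [norm_le_norm_sub_add x z, le_max_left (a + ‖x - z‖) (b + ‖z‖),
    le_max_right (a + ‖x - z‖) (b + ‖z‖)]

lemma rpow_div_eq_mul_rpow_one_div_rpow {c α : ℝ} (hc : 0 < c) (hα : α ≠ 0) (e γ δ : ℝ)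
    (he : e = γ + δ) : c ^ (e / α) = c ^ (γ / α) * (c ^ (1 / α)) ^ δ := by
  rw [← rpow_mul hc.le, ← rpow_add hc, he]
  congr 1
  field_simp

section Kernel

variable {E : Type*} [NormedAddCommGroup E] [NormedSpace ℝ E]

noncomputable def rhoKernel (α β b : ℝ) (z : E) : ℝ :=
  min (‖z‖ ^ β) 1 * (b + ‖z‖) ^ (-(finrank ℝ E : ℝ) - α)

lemma rhoKernel_nonneg {α b : ℝ} (β : ℝ) (hb : 0 ≤ b) (z : E) : 0 ≤ rhoKernel α β b z :=
  mul_nonneg (le_min (rpow_nonneg (norm_nonneg z) β) zero_le_one)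
    (rpow_nonneg (add_nonneg hb (norm_nonneg z)) _)

lemma rhoKernel_le {α β b : ℝ} (hβ : 0 ≤ β) (hb : 0 < b) (z : E) :
    rhoKernel α β b z ≤ (b + ‖z‖) ^ (-((finrank ℝ E : ℝ) + α - β)) := by
  have hbz : 0 < b + ‖z‖ := by positivity
  calc rhoKernel α β b z ≤ (b + ‖z‖) ^ β * (b + ‖z‖) ^ (-(finrank ℝ E : ℝ) - α) := by
        unfold rhoKernel
        gcongr
        exact (min_le_left _ _).trans (rpow_le_rpow (norm_nonneg z) (by linarith) hβ)
    _ = (b + ‖z‖) ^ (-((finrank ℝ E : ℝ) + α - β)) := by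
        rw [← rpow_add hbz]
        ring_nf

lemma add_norm_rpow_eq {b r : ℝ} (hb : 0 < b) (z : E) :
    (b + ‖z‖) ^ (-r) = b ^ (-r) * (1 + ‖b⁻¹ • z‖) ^ (-r) := by
  rw [norm_smul, Real.norm_eq_abs, abs_of_pos (inv_pos.2 hb), ← mul_rpow hb.le (by positivity),
    mul_add, mul_inv_cancel_left₀ hb.ne', mul_one]

lemma rhoKernel_sub_comm (α β b : ℝ) (x z : E) :
    rhoKernel α β b (x - z) = rhoKernel α β b (z - x) := by
  simp only [rhoKernel, norm_sub_rev x z]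

lemma rhoKernel_mul_rhoKernel_le {α β₁ β₂ a b M : ℝ} (hα : 0 ≤ α) (hβ₁ : 0 ≤ β₁)
    (hβ₁1 : β₁ ≤ 1) (hβ₂ : 0 ≤ β₂) (hβ₂1 : β₂ ≤ 1) (ha : 0 < a) (hb : 0 < b) (hM : 0 < M)
    {x z : E} (hmax : M ≤ max (a + ‖x - z‖) (b + ‖z‖)) :
    rhoKernel α β₁ a (x - z) * rhoKernel α β₂ b z ≤ M ^ (-(finrank ℝ E : ℝ) - α) *
      (min (‖x‖ ^ β₁) 1 * rhoKernel α β₂ b z + rhoKernel α (β₁ + β₂) b z +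
        (min (‖x‖ ^ β₂) 1 * rhoKernel α β₁ a (x - z) + rhoKernel α (β₁ + β₂) a (x - z))) := by
  simp only [rhoKernel]
  set κ := -(finrank ℝ E : ℝ) - α
  have hκ : κ ≤ 0 := by simp only [κ]; linarith [(finrank ℝ E).cast_nonneg (α := ℝ)]
  have h₁ : min (‖x - z‖ ^ β₁) 1 * min (‖z‖ ^ β₂) 1 ≤
      min (‖x‖ ^ β₁) 1 * min (‖z‖ ^ β₂) 1 + min (‖z‖ ^ (β₁ + β₂)) 1 :=
    min_rpow_one_mul_min_rpow_one_le_add hβ₁ hβ₁1 hβ₂ (norm_nonneg _) (norm_nonneg x)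
      (norm_nonneg z) (norm_sub_le x z)
  have h₂ : min (‖z‖ ^ β₂) 1 * min (‖x - z‖ ^ β₁) 1 ≤
      min (‖x‖ ^ β₂) 1 * min (‖x - z‖ ^ β₁) 1 + min (‖x - z‖ ^ (β₁ + β₂)) 1 := by
    rw [add_comm β₁]
    exact min_rpow_one_mul_min_rpow_one_le_add hβ₂ hβ₂1 hβ₁ (norm_nonneg z) (norm_nonneg x)
      (norm_nonneg _) (by simpa only [norm_sub_rev z x] using norm_le_norm_add_norm_sub' z x)
  have hpq := rpow_mul_rpow_le_of_le_max (by positivity) (by positivity) hM hmax hκ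
  calc min (‖x - z‖ ^ β₁) 1 * (a + ‖x - z‖) ^ κ * (min (‖z‖ ^ β₂) 1 * (b + ‖z‖) ^ κ)
      = min (‖x - z‖ ^ β₁) 1 * min (‖z‖ ^ β₂) 1 * ((a + ‖x - z‖) ^ κ * (b + ‖z‖) ^ κ) := by
        ring
    _ ≤ min (‖x - z‖ ^ β₁) 1 * min (‖z‖ ^ β₂) 1 *
          (M ^ κ * ((a + ‖x - z‖) ^ κ + (b + ‖z‖) ^ κ)) := by gcongr
    _ = M ^ κ * (min (‖x - z‖ ^ β₁) 1 * min (‖z‖ ^ β₂) 1 * (b + ‖z‖) ^ κ +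
          min (‖z‖ ^ β₂) 1 * min (‖x - z‖ ^ β₁) 1 * (a + ‖x - z‖) ^ κ) := by ring
    _ ≤ M ^ κ *
        ((min (‖x‖ ^ β₁) 1 * min (‖z‖ ^ β₂) 1 + min (‖z‖ ^ (β₁ + β₂)) 1) * (b + ‖z‖) ^ κ +
          (min (‖x‖ ^ β₂) 1 * min (‖x - z‖ ^ β₁) 1 + min (‖x - z‖ ^ (β₁ + β₂)) 1) *
            (a + ‖x - z‖) ^ κ) := by gcongr
    _ = _ := by ring

variable [MeasurableSpace E] [BorelSpace E] (μ : Measure E)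

lemma integral_rhoKernel_sub [μ.IsAddRightInvariant] (α β b : ℝ) (x : E) :
    ∫ z, rhoKernel α β b (x - z) ∂μ = ∫ z, rhoKernel α β b z ∂μ := by
  simpa only [rhoKernel_sub_comm α β b x] using integral_sub_right_eq_self (rhoKernel α β b) x

variable [FiniteDimensional ℝ E] [μ.IsAddHaarMeasure]

lemma integrable_add_norm_rpow {b r : ℝ} (hb : 0 < b) (hr : (finrank ℝ E : ℝ) < r) :
    Integrable (fun z : E => (b + ‖z‖) ^ (-r)) μ := by
  simp_rw [add_norm_rpow_eq hb]
  exact ((integrable_one_add_norm hr).comp_smul (inv_ne_zero hb.ne')).const_mul _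

lemma integral_add_norm_rpow {b r : ℝ} (hb : 0 < b) :
    ∫ z, (b + ‖z‖) ^ (-r) ∂μ = b ^ ((finrank ℝ E : ℝ) - r) * ∫ w, (1 + ‖w‖) ^ (-r) ∂μ := by
  simp_rw [add_norm_rpow_eq hb]
  rw [integral_const_mul, show ∫ z, (1 + ‖b⁻¹ • z‖) ^ (-r) ∂μ = _ from
    Measure.integral_comp_inv_smul_of_nonneg μ (fun w => (1 + ‖w‖) ^ (-r)) hb.le, smul_eq_mul,
    ← mul_assoc, ← rpow_natCast, ← rpow_add hb, neg_add_eq_sub]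

lemma integrable_rhoKernel {α β b : ℝ} (hβ : 0 ≤ β) (hβα : β < α) (hb : 0 < b) :
    Integrable (rhoKernel (E := E) α β b) μ := by
  refine (integrable_add_norm_rpow μ hb (r := (finrank ℝ E : ℝ) + α - β) (by linarith)).mono'
    ?_ (.of_forall fun z => ?_)
  · unfold rhoKernel
    fun_prop
  · rw [Real.norm_of_nonneg (rhoKernel_nonneg β hb.le z)]
    exact rhoKernel_le hβ hb z

lemma integrable_rhoKernel_sub {α β b : ℝ} (hβ : 0 ≤ β) (hβα : β < α) (hb : 0 < b) (x : E) :
    Integrable (fun z => rhoKernel α β b (x - z)) μ := by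
  simpa only [rhoKernel_sub_comm α β b x] using
    (integrable_rhoKernel (α := α) μ hβ hβα hb).comp_sub_right x

lemma integral_rhoKernel_le {α β b : ℝ} (hβ : 0 ≤ β) (hβα : β < α) (hb : 0 < b) :
    ∫ z, rhoKernel α β b z ∂μ ≤
      (∫ w : E, (1 + ‖w‖) ^ (-((finrank ℝ E : ℝ) + α - β)) ∂μ) * b ^ (β - α) :=
  calc ∫ z, rhoKernel α β b z ∂μ ≤ ∫ z : E, (b + ‖z‖) ^ (-((finrank ℝ E : ℝ) + α - β)) ∂μ :=
        integral_mono (integrable_rhoKernel μ hβ hβα hb)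
          (integrable_add_norm_rpow μ hb (by linarith)) (rhoKernel_le hβ hb)
    _ = _ := by rw [integral_add_norm_rpow μ hb, mul_comm]; ring_nf

lemma integral_rhoKernel_mul_rhoKernel_le {α β₁ β₂ a b M : ℝ} (hβ₁ : 0 ≤ β₁) (hβ₁1 : β₁ ≤ 1)
    (hβ₂ : 0 ≤ β₂) (hβ₂1 : β₂ ≤ 1) (hβα : β₁ + β₂ < α) (ha : 0 < a) (hb : 0 < b) (hM : 0 < M)
    (x : E) (hmax : ∀ z, M ≤ max (a + ‖x - z‖) (b + ‖z‖)) :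
    ∫ z, rhoKernel α β₁ a (x - z) * rhoKernel α β₂ b z ∂μ ≤ M ^ (-(finrank ℝ E : ℝ) - α) *
      (min (‖x‖ ^ β₁) 1 * ∫ z, rhoKernel α β₂ b z ∂μ + ∫ z, rhoKernel α (β₁ + β₂) b z ∂μ +
        (min (‖x‖ ^ β₂) 1 * ∫ z, rhoKernel α β₁ a z ∂μ + ∫ z, rhoKernel α (β₁ + β₂) a z ∂μ)) := by
  have hβ₁₂ : 0 ≤ β₁ + β₂ := add_nonneg hβ₁ hβ₂
  have I₂ := (integrable_rhoKernel (α := α) μ hβ₂ (by linarith) hb).const_mul (min (‖x‖ ^ β₁) 1)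
  have I₁₂ := integrable_rhoKernel (α := α) μ hβ₁₂ hβα hb
  have I₁ := (integrable_rhoKernel_sub (α := α) μ hβ₁ (by linarith) ha x).const_mul
    (min (‖x‖ ^ β₂) 1)
  have I₁₂' := integrable_rhoKernel_sub (α := α) μ hβ₁₂ hβα ha x
  calc ∫ z, rhoKernel α β₁ a (x - z) * rhoKernel α β₂ b z ∂μ
      ≤ ∫ z, M ^ (-(finrank ℝ E : ℝ) - α) *
          (min (‖x‖ ^ β₁) 1 * rhoKernel α β₂ b z + rhoKernel α (β₁ + β₂) b z +
            (min (‖x‖ ^ β₂) 1 * rhoKernel α β₁ a (x - z) + rhoKernel α (β₁ + β₂) a (x - z))) ∂μ :=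
        integral_mono_of_nonneg
          (.of_forall fun _ => mul_nonneg (rhoKernel_nonneg _ ha.le _) (rhoKernel_nonneg _ hb.le _))
          (((I₂.add I₁₂).add (I₁.add I₁₂')).const_mul _)
          (.of_forall fun z => rhoKernel_mul_rhoKernel_le (by linarith) hβ₁ hβ₁1 hβ₂ hβ₂1 ha hb hM
            (hmax z))
    _ = _ := by
        rw [integral_const_mul, integral_add, integral_add, integral_add, integral_const_mul,
          integral_const_mul, integral_rhoKernel_sub, integral_rhoKernel_sub]
        exacts [I₁, I₁₂', I₂, I₁₂, I₂.add I₁₂, I₁.add I₁₂']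

lemma exists_integral_rhoKernel_mul_rhoKernel_le {α β₁ β₂ : ℝ} (hβ₁ : 0 ≤ β₁) (hβ₁1 : β₁ ≤ 1)
    (hβ₂ : 0 ≤ β₂) (hβ₂1 : β₂ ≤ 1) (hβα : β₁ + β₂ < α) :
    ∃ J > 0, ∀ (a b M : ℝ) (x : E), 0 < a → 0 < b → 0 < M →
      (∀ z, M ≤ max (a + ‖x - z‖) (b + ‖z‖)) →
      ∫ z, rhoKernel α β₁ a (x - z) * rhoKernel α β₂ b z ∂μ ≤
        J * M ^ (-(finrank ℝ E : ℝ) - α) * (a ^ (β₁ + β₂ - α) + b ^ (β₁ + β₂ - α) +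
          min (‖x‖ ^ β₂) 1 * a ^ (β₁ - α) + min (‖x‖ ^ β₁) 1 * b ^ (β₂ - α)) := by
  set J : ℝ → ℝ := fun β => ∫ w : E, (1 + ‖w‖) ^ (-((finrank ℝ E : ℝ) + α - β)) ∂μ
  have hJ : ∀ β, 0 ≤ J β := fun β => integral_nonneg fun w => rpow_nonneg (by positivity) _
  refine ⟨J β₁ + J β₂ + J (β₁ + β₂) + 1, by linarith [hJ β₁, hJ β₂, hJ (β₁ + β₂)], ?_⟩
  intro a b M x ha hb hM hmax
  refine (integral_rhoKernel_mul_rhoKernel_le μ hβ₁ hβ₁1 hβ₂ hβ₂1 hβα ha hb hM x hmax).trans ?_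
  have hβ₁₂ : 0 ≤ β₁ + β₂ := add_nonneg hβ₁ hβ₂
  calc _ ≤ M ^ (-(finrank ℝ E : ℝ) - α) *
        (min (‖x‖ ^ β₁) 1 * (J β₂ * b ^ (β₂ - α)) + J (β₁ + β₂) * b ^ (β₁ + β₂ - α) +
          (min (‖x‖ ^ β₂) 1 * (J β₁ * a ^ (β₁ - α)) + J (β₁ + β₂) * a ^ (β₁ + β₂ - α))) := by
        gcongr
        · exact integral_rhoKernel_le μ hβ₂ (by linarith) hb
        · exact integral_rhoKernel_le μ hβ₁₂ hβα hb
        · exact integral_rhoKernel_le μ hβ₁ (by linarith) ha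
        · exact integral_rhoKernel_le μ hβ₁₂ hβα ha
    _ ≤ M ^ (-(finrank ℝ E : ℝ) - α) *
        (min (‖x‖ ^ β₁) 1 * ((J β₁ + J β₂ + J (β₁ + β₂) + 1) * b ^ (β₂ - α)) +
          (J β₁ + J β₂ + J (β₁ + β₂) + 1) * b ^ (β₁ + β₂ - α) +
          (min (‖x‖ ^ β₂) 1 * ((J β₁ + J β₂ + J (β₁ + β₂) + 1) * a ^ (β₁ - α)) +
            (J β₁ + J β₂ + J (β₁ + β₂) + 1) * a ^ (β₁ + β₂ - α))) := by
        gcongr <;> linarith [hJ β₁, hJ β₂, hJ (β₁ + β₂)]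
    _ = _ := by ring

end Kernel

lemma rho_eq_rpow_mul_rhoKernel (d : ℕ) (α β γ t : ℝ) (x : EuclideanSpace ℝ (Fin d)) :
    rho d α β γ t x = t ^ (γ / α) * rhoKernel α β (t ^ (1 / α)) x := by
  simp only [rho, rhoKernel, finrank_euclideanSpace_fin, mul_assoc]

theorem stmt1_general (d : ℕ) (α β₁ β₂ : ℝ) (hα0 : 0 < α) (hα2 : α < 2)
    (hβ₁0 : 0 ≤ β₁) (hβ₁ : β₁ ≤ α / 4) (hβ₂0 : 0 ≤ β₂) (hβ₂ : β₂ ≤ α / 4) :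
    ∃ C > 0, ∀ (γ₁ γ₂ s t : ℝ) (x : EuclideanSpace ℝ (Fin d)),
      0 < s → s < t → t ≤ 1 →
      (∫ z : EuclideanSpace ℝ (Fin d), rho d α β₁ γ₁ (t - s) (x - z) * rho d α β₂ γ₂ s z) ≤
        C * (((t - s) ^ ((γ₁ + β₁ + β₂ - α) / α) * s ^ (γ₂ / α)
                + (t - s) ^ (γ₁ / α) * s ^ ((γ₂ + β₁ + β₂ - α) / α)) * rho d α 0 0 t x
              + (t - s) ^ ((γ₁ + β₁ - α) / α) * s ^ (γ₂ / α) * rho d α β₂ 0 t x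
              + (t - s) ^ (γ₁ / α) * s ^ ((γ₂ + β₂ - α) / α) * rho d α β₁ 0 t x) := by
  obtain ⟨J, hJ, hconv⟩ := exists_integral_rhoKernel_mul_rhoKernel_le (α := α)
    (volume : Measure (EuclideanSpace ℝ (Fin d))) hβ₁0 (by linarith) hβ₂0 (by linarith)
    (by linarith)
  set c : ℝ := (1 / 2 : ℝ) ^ (1 / α)
  have hc : 0 < c := by positivity
  refine ⟨(c / 2) ^ (-(d : ℝ) - α) * J, mul_pos (rpow_pos_of_pos (div_pos hc two_pos) _) hJ,
    fun γ₁ γ₂ s t x hs hst _ => ?_⟩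
  have hts : 0 < t - s := sub_pos.2 hst
  have hmax := le_max_add_norm_sub_add_norm
    (rpow_le_one (by norm_num) (by norm_num) (by positivity))
    (half_rpow_mul_rpow_le (p := 1 / α) (by positivity) hs.le hst.le) x
  have hα : α ≠ 0 := hα0.ne'
  have hT : 0 < t ^ (1 / α) := rpow_pos_of_pos (hs.trans hst) _
  calc ∫ z, rho d α β₁ γ₁ (t - s) (x - z) * rho d α β₂ γ₂ s z
      = (t - s) ^ (γ₁ / α) * s ^ (γ₂ / α) *
          ∫ z, rhoKernel α β₁ ((t - s) ^ (1 / α)) (x - z) * rhoKernel α β₂ (s ^ (1 / α)) z := by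
        simp only [rho_eq_rpow_mul_rhoKernel, ← integral_const_mul, mul_mul_mul_comm]
    _ ≤ (t - s) ^ (γ₁ / α) * s ^ (γ₂ / α) * (J * (c / 2 * (t ^ (1 / α) + ‖x‖)) ^ (-(d : ℝ) - α) *
          (((t - s) ^ (1 / α)) ^ (β₁ + β₂ - α) + (s ^ (1 / α)) ^ (β₁ + β₂ - α) +
            min (‖x‖ ^ β₂) 1 * ((t - s) ^ (1 / α)) ^ (β₁ - α) +
            min (‖x‖ ^ β₁) 1 * (s ^ (1 / α)) ^ (β₂ - α))) := by
        gcongr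
        simpa only [finrank_euclideanSpace_fin] using
          hconv _ _ _ x (rpow_pos_of_pos hts _) (rpow_pos_of_pos hs _)
            (mul_pos (div_pos hc two_pos) (by positivity)) hmax
    _ = _ := by
        rw [rpow_div_eq_mul_rpow_one_div_rpow hts hα (γ₁ + β₁ + β₂ - α) γ₁ (β₁ + β₂ - α) (by ring),
          rpow_div_eq_mul_rpow_one_div_rpow hts hα (γ₁ + β₁ - α) γ₁ (β₁ - α) (by ring),
          rpow_div_eq_mul_rpow_one_div_rpow hs hα (γ₂ + β₁ + β₂ - α) γ₂ (β₁ + β₂ - α) (by ring),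
          rpow_div_eq_mul_rpow_one_div_rpow hs hα (γ₂ + β₂ - α) γ₂ (β₂ - α) (by ring),
          mul_rpow (div_pos hc two_pos).le (by positivity)]
        simp only [rho, zero_div, rpow_zero, min_self, one_mul]
        ring

/-- convolution inequality for the functions `ϱ^β_γ`. -/
theorem stmt1 (d : ℕ) (hd : 1 ≤ d) (α β₁ β₂ : ℝ) (hα0 : 0 < α) (hα2 : α < 2)
    (hβ₁0 : 0 ≤ β₁) (hβ₁ : β₁ ≤ α / 4) (hβ₂0 : 0 ≤ β₂) (hβ₂ : β₂ ≤ α / 4) :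
    ∃ C > 0, ∀ (γ₁ γ₂ s t : ℝ) (x : EuclideanSpace ℝ (Fin d)),
      0 < s → s < t → t ≤ 1 →
      (∫ z : EuclideanSpace ℝ (Fin d), rho d α β₁ γ₁ (t - s) (x - z) * rho d α β₂ γ₂ s z) ≤
        C * (((t - s) ^ ((γ₁ + β₁ + β₂ - α) / α) * s ^ (γ₂ / α)
                + (t - s) ^ (γ₁ / α) * s ^ ((γ₂ + β₁ + β₂ - α) / α)) * rho d α 0 0 t x
              + (t - s) ^ ((γ₁ + β₁ - α) / α) * s ^ (γ₂ / α) * rho d α β₂ 0 t x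
              + (t - s) ^ (γ₁ / α) * s ^ ((γ₂ + β₂ - α) / α) * rho d α β₁ 0 t x) :=
  stmt1_general d α β₁ β₂ hα0 hα2 hβ₁0 hβ₁ hβ₂0 hβ₂
end
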